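/- arXiv:1112.0638 — 4 statements merged into one kernel-verified Lean document; each statement's English description precedes it below -/
import Mathlib

section
/- Schur-Weyl duality, second direction: for all d, n ≥ 1, the unital ℂ-subalgebra generated by {V^{⊗n} : V ∈ U(d)} inside the algebra of matrices on (ℂ^d)^{⊗n} equals the commutant of the set of permutation operators {P(σ) : σ a permutation of Fin n}. -/
/- Schur-Weyl duality, second direction:
the unital ℂ-subalgebra generated by {V^{⊗n} : V ∈ U(d)} inside the algebra of
matrices on (ℂ^d)^{⊗n} equals the commutant of the permutation operators. -/

open Matrix

noncomputable section

/-- Matrices on the n-fold tensor power (ℂ^d)^{⊗n}. -/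
abbrev MatN (d n : ℕ) := Matrix (Fin n → Fin d) (Fin n → Fin d) ℂ

/-- The n-fold tensor power V^{⊗n} of a matrix V on ℂ^d. -/
def tpow (d n : ℕ) (V : Matrix (Fin d) (Fin d) ℂ) : MatN d n :=
  Matrix.of fun x y => ∏ i, V (x i) (y i)

/-- The permutation operator P(σ) on (ℂ^d)^{⊗n}. -/
def permMat (d n : ℕ) (σ : Equiv.Perm (Fin n)) : MatN d n :=
  Matrix.of fun x y => if x = y ∘ ⇑σ⁻¹ then 1 else 0

end

/-!
Tensor powers commute with permutations, which gives one inclusion. Conversely, a matrix `X`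
commuting with all `P(σ)` satisfies `X (x ∘ σ) (y ∘ σ) = X x y`, so `n! • X` is a combination of
the symmetrised elementary tensors `∑ σ, E_{x∘σ, y∘σ}`. By Ryser's inclusion-exclusion formula for
the permanent each of these is a signed sum of tensor powers `A^{⊗n}`.

It remains to see that `A^{⊗n}` lies in the span of the `V^{⊗n}` with `V` unitary, i.e. that a
functional `ψ` vanishing on the latter vanishes on every `A^{⊗n}`. Along an affine family of
matrices, `ψ (A^{⊗n})` is a polynomial in the parameters, so its vanishing propagates from a box
with infinite sides to everything: from `U * diagonal w * V` with `|wᵢ| = 1` to arbitrary `w`, hence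
(spectral theorem) to Hermitian matrices, and from `ℜ A + t • ℑ A` with `t` real to `A` itself.
-/

open Finset Equiv
open scoped Nat

theorem Matrix.permanent_eq_sum_neg_one_pow_prod_sum {ι R : Type*} [Fintype ι] [DecidableEq ι]
    [CommRing R] (M : Matrix ι ι R) :
    M.permanent = ∑ t : Finset ι, (-1 : ℤ) ^ #t • ∏ i, ∑ j ∈ tᶜ, M j i := by
  -- Inclusion-exclusion over the maps `g : ι → ι` missing `j`: those missing nothing are bijective.
  have h := inclusion_exclusion_sum_inf_compl univ
    (fun j : ι => ({g | ∀ i, g i ≠ j} : Finset (ι → ι))) (fun g => ∏ i, M (g i) i)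
  have hsurj : (univ.inf fun j : ι => ({g | ∀ i, g i ≠ j} : Finset (ι → ι))ᶜ) =
      univ.map ⟨_, DFunLike.coe_injective (F := Perm ι)⟩ := by
    ext g
    simp only [Finset.mem_inf, mem_compl, mem_filter, mem_univ, true_and, mem_map,
      Function.Embedding.coeFn_mk, forall_const, not_forall, not_not]
    exact ⟨fun hg => ⟨Equiv.ofBijective g (Finite.surjective_iff_bijective.1 fun j => hg j), rfl⟩,
      fun ⟨σ, hσ⟩ => hσ ▸ σ.surjective⟩
  rw [hsurj, sum_map, powerset_univ] at h
  refine h.trans (sum_congr rfl fun t _ => congrArg _ ?_)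
  rw [prod_univ_sum]
  congr 1
  ext g
  simp only [Finset.mem_inf, mem_filter, mem_univ, true_and, Fintype.mem_piFinset, mem_compl]
  exact ⟨fun hg i hi => hg (g i) hi i rfl, fun hg j hj i hi => hg i (hi ▸ hj)⟩

theorem Matrix.diagonal_mem_unitaryGroup {ι 𝕜 : Type*} [Fintype ι] [DecidableEq ι] [RCLike 𝕜]
    {w : ι → 𝕜} (hw : ∀ i, ‖w i‖ = 1) : diagonal w ∈ unitaryGroup ι 𝕜 := by
  rw [mem_unitaryGroup_iff', star_eq_conjTranspose, diagonal_conjTranspose, diagonal_mul_diagonal,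
    ← diagonal_one]
  congr 1
  ext i
  simp [RCLike.conj_mul, hw i]

section Permutations

variable {d n : ℕ}

lemma permMat_mul_apply (σ : Perm (Fin n)) (X : MatN d n) (x y : Fin n → Fin d) :
    (permMat d n σ * X) x y = X (x ∘ σ) y := by
  simp [mul_apply, permMat, Equiv.eq_comp_symm]

lemma mul_permMat_apply (σ : Perm (Fin n)) (X : MatN d n) (x y : Fin n → Fin d) :
    (X * permMat d n σ) x y = X x (y ∘ ⇑σ⁻¹) := by
  simp [mul_apply, permMat]

lemma permMat_mul_tpow_comm (σ : Perm (Fin n)) (V : Matrix (Fin d) (Fin d) ℂ) :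
    permMat d n σ * tpow d n V = tpow d n V * permMat d n σ := by
  ext x y
  rw [permMat_mul_apply, mul_permMat_apply]
  exact Fintype.prod_equiv σ _ _ fun i => by simp

lemma apply_comp_perm_of_forall_commute {X : MatN d n}
    (hX : ∀ σ : Perm (Fin n), permMat d n σ * X = X * permMat d n σ)
    (σ : Perm (Fin n)) (x y : Fin n → Fin d) : X (x ∘ σ) (y ∘ σ) = X x y := by
  rw [← permMat_mul_apply σ X, hX, mul_permMat_apply]
  simp [Function.comp_assoc]

end Permutations

section SymmetricTensors

variable {d n : ℕ}

lemma sum_perm_single_comp_eq_sum_zsmul_tpow (x y : Fin n → Fin d) :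
    ∑ σ : Perm (Fin n), single (x ∘ σ) (y ∘ σ) (1 : ℂ) =
      ∑ t : Finset (Fin n), (-1 : ℤ) ^ #t • tpow d n (∑ j ∈ tᶜ, single (x j) (y j) 1) := by
  ext a b
  have h :=
    permanent_eq_sum_neg_one_pow_prod_sum (of fun j i => single (x j) (y j) (1 : ℂ) (a i) (b i))
  simp only [permanent, of_apply] at h
  simp only [Matrix.sum_apply, Matrix.smul_apply, tpow, of_apply]
  convert h using 2 with σ
  simp [single_apply, Finset.prod_boole, funext_iff, forall_and]

lemma mem_span_range_tpow_of_forall_commute {X : MatN d n}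
    (hX : ∀ σ : Perm (Fin n), permMat d n σ * X = X * permMat d n σ) :
    X ∈ Submodule.span ℂ (Set.range (tpow d n)) := by
  have hsym : ∀ σ : Perm (Fin n), ∑ x, ∑ y, X x y • single (x ∘ σ) (y ∘ σ) (1 : ℂ) = X := by
    intro σ
    conv_rhs => rw [matrix_eq_sum_single X]
    let e : (Fin n → Fin d) ≃ (Fin n → Fin d) := σ.symm.arrowCongr (Equiv.refl _)
    refine Fintype.sum_equiv e _ _ fun x => Fintype.sum_equiv e _ _ fun y => ?_
    rw [smul_single, smul_eq_mul, mul_one]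
    exact congrArg₂ _ rfl (apply_comp_perm_of_forall_commute hX σ x y).symm
  have hfact : (n ! : ℂ) • X =
      ∑ x, ∑ y, X x y • ∑ σ : Perm (Fin n), single (x ∘ σ) (y ∘ σ) (1 : ℂ) :=
    calc (n ! : ℂ) • X = ∑ σ : Perm (Fin n), X := by
          rw [sum_const, Finset.card_univ, Fintype.card_perm, Fintype.card_fin,
            Nat.cast_smul_eq_nsmul]
      _ = ∑ σ : Perm (Fin n), ∑ x, ∑ y, X x y • single (x ∘ σ) (y ∘ σ) (1 : ℂ) := by
          simp only [hsym]
      _ = _ := by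
          rw [sum_comm]
          refine sum_congr rfl fun x _ => ?_
          rw [sum_comm]
          simp only [smul_sum]
  rw [← Submodule.smul_mem_iff _ ((Nat.cast_ne_zero (R := ℂ)).2 n.factorial_ne_zero), hfact]
  refine Submodule.sum_mem _ fun x _ => Submodule.sum_mem _ fun y _ => Submodule.smul_mem _ _ ?_
  rw [sum_perm_single_comp_eq_sum_zsmul_tpow]
  exact Submodule.sum_mem _ fun t _ =>
    Submodule.smul_of_tower_mem _ _ (Submodule.subset_span ⟨_, rfl⟩)

end SymmetricTensors

section UnitaryDensity

open MvPolynomial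
open scoped ComplexStarModule

variable {d n : ℕ}

lemma exists_mvPolynomial_eval_eq_apply_tpow (ψ : Module.Dual ℂ (MatN d n)) {ι : Type*}
    (q : Fin d → Fin d → MvPolynomial ι ℂ) :
    ∃ P : MvPolynomial ι ℂ, ∀ w, eval w P = ψ (tpow d n (of fun j k => eval w (q j k))) := by
  refine ⟨∑ x, ∑ y, C (ψ (single x y 1)) * ∏ i, q (x i) (y i), fun w => ?_⟩
  have hsingle : ∀ (x y : Fin n → Fin d) (c : ℂ), single x y c = c • single x y (1 : ℂ) :=
    fun x y c => by rw [smul_single, smul_eq_mul, mul_one]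
  conv_rhs => rw [matrix_eq_sum_single (tpow d n _)]
  simp only [map_sum, eval_mul, eval_C, eval_prod]
  refine sum_congr rfl fun x _ => sum_congr rfl fun y _ => ?_
  rw [hsingle x y (tpow d n _ x y), map_smul, smul_eq_mul, mul_comm]
  rfl

variable {ψ : Module.Dual ℂ (MatN d n)}

lemma apply_tpow_eval_eq_zero {ι : Type*} (q : Fin d → Fin d → MvPolynomial ι ℂ)
    (s : ι → Set ℂ) (hs : ∀ i, (s i).Infinite)
    (h : ∀ w ∈ Set.univ.pi s, ψ (tpow d n (of fun j k => eval w (q j k))) = 0) (w : ι → ℂ) :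
    ψ (tpow d n (of fun j k => eval w (q j k))) = 0 := by
  obtain ⟨P, hP⟩ := exists_mvPolynomial_eval_eq_apply_tpow ψ q
  have hP0 : P = 0 := funext_set s hs fun w hw => by simpa [hP] using h w hw
  rw [← hP, hP0, map_zero]

lemma apply_tpow_mul_diagonal_mul_eq_zero (hψ : ∀ V ∈ unitaryGroup (Fin d) ℂ, ψ (tpow d n V) = 0)
    {U V : Matrix (Fin d) (Fin d) ℂ} (hU : U ∈ unitaryGroup (Fin d) ℂ)
    (hV : V ∈ unitaryGroup (Fin d) ℂ) (w : Fin d → ℂ) :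
    ψ (tpow d n (U * diagonal w * V)) = 0 := by
  have hUwV : ∀ w, U * diagonal w * V = of fun j k => eval w (∑ l, C (U j l * V l k) * X l) :=
    fun w => by
      ext j k
      rw [mul_apply]
      simp [mul_diagonal, mul_comm, mul_left_comm]
  rw [hUwV]
  refine apply_tpow_eval_eq_zero _ (fun _ => Metric.sphere 0 1) (fun _ => ?_) (fun w hw => ?_) w
  · exact (isPreconnected_sphere (by simp) 0 1).infinite_of_nontrivial
      ⟨1, by simp, -1, by simp, by norm_num⟩
  · have hw : diagonal w ∈ unitaryGroup (Fin d) ℂ :=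
      diagonal_mem_unitaryGroup fun i => by simpa using hw i trivial
    rw [← hUwV]
    exact hψ _ (mul_mem (mul_mem hU hw) hV)

lemma apply_tpow_eq_zero_of_isHermitian
    (hψ : ∀ V ∈ unitaryGroup (Fin d) ℂ, ψ (tpow d n V) = 0)
    {H : Matrix (Fin d) (Fin d) ℂ} (hH : H.IsHermitian) : ψ (tpow d n H) = 0 := by
  rw [hH.spectral_theorem, Unitary.conjStarAlgAut_apply]
  exact apply_tpow_mul_diagonal_mul_eq_zero hψ (SetLike.coe_mem _)
    (Unitary.star_mem (SetLike.coe_mem _)) _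

lemma apply_tpow_eq_zero (hψ : ∀ V ∈ unitaryGroup (Fin d) ℂ, ψ (tpow d n V) = 0)
    (A : Matrix (Fin d) (Fin d) ℂ) : ψ (tpow d n A) = 0 := by
  have hA : ∀ w : Unit → ℂ, (ℜ A : Matrix (Fin d) (Fin d) ℂ) + w () • (ℑ A : Matrix _ _ ℂ) =
      of fun j k => eval w (C ((ℜ A : Matrix _ _ ℂ) j k) + C ((ℑ A : Matrix _ _ ℂ) j k) * X ()) :=
    fun w => by
      ext j k
      simp [mul_comm]
  rw [← realPart_add_I_smul_imaginaryPart A, hA fun _ => Complex.I]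
  refine apply_tpow_eval_eq_zero _ (fun _ => Set.range Complex.ofReal)
    (fun _ => Set.infinite_range_of_injective Complex.ofReal_injective) (fun w hw => ?_) _
  obtain ⟨t, ht⟩ := hw () trivial
  rw [← hA, ← ht]
  exact apply_tpow_eq_zero_of_isHermitian hψ
    ((ℜ A).2.add (IsSelfAdjoint.smul (Complex.conj_ofReal t) (ℑ A).2))

lemma tpow_mem_span_tpow_unitaryGroup (A : Matrix (Fin d) (Fin d) ℂ) :
    tpow d n A ∈
      Submodule.span ℂ {M : MatN d n | ∃ V ∈ unitaryGroup (Fin d) ℂ, M = tpow d n V} := by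
  by_contra hA
  obtain ⟨ψ, hψA, hψ⟩ := Submodule.exists_dual_map_eq_bot_of_notMem hA inferInstance
  refine hψA (apply_tpow_eq_zero (fun V hV => ?_) A)
  exact (Submodule.eq_bot_iff _).1 hψ _
    (Submodule.mem_map_of_mem (Submodule.subset_span ⟨V, hV, rfl⟩))

end UnitaryDensity

theorem schur_weyl_second_direction_general (d n : ℕ) :
    (Algebra.adjoin ℂ
        {M : MatN d n | ∃ V ∈ Matrix.unitaryGroup (Fin d) ℂ, M = tpow d n V}
      : Set (MatN d n))
      = {X : MatN d n | ∀ σ : Equiv.Perm (Fin n),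
          permMat d n σ * X = X * permMat d n σ} := by
  refine Set.Subset.antisymm ?_ fun X hX => ?_
  · have hle : Algebra.adjoin ℂ {M : MatN d n | ∃ V ∈ unitaryGroup (Fin d) ℂ, M = tpow d n V} ≤
        Subalgebra.centralizer ℂ (Set.range (permMat d n)) := by
      refine Algebra.adjoin_le ?_
      rintro _ ⟨V, -, rfl⟩ _ ⟨σ, rfl⟩
      exact permMat_mul_tpow_comm σ V
    exact fun X hX σ => hle hX _ ⟨σ, rfl⟩
  · refine Algebra.span_le_adjoin ℂ _
      (Submodule.span_le.2 ?_ (mem_span_range_tpow_of_forall_commute hX))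
    rintro _ ⟨A, rfl⟩
    exact tpow_mem_span_tpow_unitaryGroup A

theorem schur_weyl_second_direction (d n : ℕ) (hd : 1 ≤ d) (hn : 1 ≤ n) :
    (Algebra.adjoin ℂ
        {M : MatN d n | ∃ V ∈ Matrix.unitaryGroup (Fin d) ℂ, M = tpow d n V}
      : Set (MatN d n))
      = {X : MatN d n | ∀ σ : Equiv.Perm (Fin n),
          permMat d n σ * X = X * permMat d n σ} :=
  schur_weyl_second_direction_general d n
end

section
/- Twirling lemma: let H be a closed subgroup of U(d) with Haar probability measure μ_H, and let p be a Borel probability measure on Matrix (Fin d) (Fin d) ℂ, supported on density matrices, such that for every V ∈ H the pushforward of p under ρ ↦ V·ρ·V* equals p. Let l : ℕ and let s : Matrix (Fin d) (Fin d) ℂ → (Fin l → ℝ) be Borel measurable with s(V·ρ·V*) = s(ρ) for every V ∈ H and every ρ. For a matrix M on (ℂ^d)^{⊗n}, define T(M) := ∫_H V^{⊗n}·M·(V^{⊗n})* dμ_H(V) (entrywise Bochner integral). Then for every Borel set Δ ⊆ (Fin l → ℝ), ∫ over {ρ : s(ρ) ∈ Δ} of trace(ρ^{⊗n}·T(M))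 dp(ρ) = ∫ over {ρ : s(ρ) ∈ Δ} of trace(ρ^{⊗n}·M) dp(ρ); in particular the conditional outcome statistics of the twirled measurement coincide with those of the original one. -/
/-! Both sides are linear in the measurement operator, so they only see the moment matrix
`R = ∫_{s ρ ∈ Δ} ρ^{⊗n} dp`. Cycling the trace gives
`tr (R · V^{⊗n} M V^{⊗n}*) = tr (V^{⊗n}* R V^{⊗n} · M)`, and `R` is fixed by conjugation with
every `V ∈ H` because both `p` and the event `{s ρ ∈ Δ}` are. Averaging over `V` therefore
changes nothing. Entries of density matrices and of unitaries are bounded by `1`, which makes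
every entry integrable and lets the finite sums of the trace pass through the integrals. -/

open Matrix MeasureTheory
open scoped ComplexOrder

noncomputable section

/-- The Borel measurable structure on matrices (entrywise). -/
instance matrixMeasurableSpace (m n : Type) : MeasurableSpace (Matrix m n ℂ) :=
  inferInstanceAs (MeasurableSpace (m → n → ℂ))

/-- The underlying set of matrices of a subgroup of the unitary group. -/
def carrier (d : ℕ) (H : Subgroup (Matrix.unitaryGroup (Fin d) ℂ)) :
    Set (Matrix (Fin d) (Fin d) ℂ) :=
  {V | ∃ U ∈ H, V = ((U : Matrix.unitaryGroup (Fin d) ℂ) : Matrix (Fin d) (Fin d) ℂ)}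

instance matrixBorelSpace (m n : Type) [Fintype m] [Fintype n] : BorelSpace (Matrix m n ℂ) :=
  inferInstanceAs (BorelSpace (m → n → ℂ))

section TensorPower

variable {d n : ℕ}

lemma tpow_mul (A B : Matrix (Fin d) (Fin d) ℂ) : tpow d n (A * B) = tpow d n A * tpow d n B := by
  ext x y
  simp only [tpow, of_apply, mul_apply, Finset.prod_univ_sum, Fintype.piFinset_univ,
    Finset.prod_mul_distrib]

lemma tpow_conjTranspose (A : Matrix (Fin d) (Fin d) ℂ) : tpow d n Aᴴ = (tpow d n A)ᴴ := by
  ext x y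
  simp [tpow, conjTranspose_apply, star_prod]

@[fun_prop]
lemma continuous_tpow : Continuous (tpow d n) :=
  continuous_pi fun _ => continuous_pi fun _ => by simp only [tpow, of_apply]; fun_prop

lemma trace_tpow_mul_conj (ρ V : Matrix (Fin d) (Fin d) ℂ) (M : MatN d n) :
    (tpow d n ρ * (tpow d n V * M * (tpow d n V)ᴴ)).trace = (tpow d n (Vᴴ * ρ * V) * M).trace := by
  simp only [tpow_mul, tpow_conjTranspose, Matrix.mul_assoc]
  rw [trace_mul_comm (tpow d n V)ᴴ]
  simp only [Matrix.mul_assoc]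

end TensorPower

lemma isCompact_setOf_norm_apply_le_one (m n : Type) [Fintype m] [Fintype n] :
    IsCompact {A : Matrix m n ℂ | ∀ i j, ‖A i j‖ ≤ 1} := by
  have : IsCompact {A : m → n → ℂ | ∀ i j, ‖A i j‖ ≤ 1} := by
    simpa [Set.pi] using isCompact_univ_pi fun _ : m => isCompact_univ_pi fun _ : n =>
      isCompact_closedBall (0 : ℂ) 1
  exact this

lemma Matrix.PosSemidef.norm_apply_le_norm_trace {ι : Type*} [Fintype ι] {A : Matrix ι ι ℂ}
    (hA : A.PosSemidef) (i j : ι) : ‖A i j‖ ≤ ‖A.trace‖ := by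
  have hdiag (k : ι) : ‖A k k‖ ≤ ‖A.trace‖ :=
    CStarAlgebra.norm_le_norm_of_nonneg_of_le hA.diag_nonneg
      (Finset.single_le_sum (f := fun k => A k k) (fun k _ => hA.diag_nonneg) (Finset.mem_univ k))
  have hminor : ((‖A i j‖ ^ 2 : ℝ) : ℂ) ≤ A i i * A j j := by
    have hdet := (hA.submatrix ![i, j]).det_nonneg
    rw [det_fin_two] at hdet
    simp only [submatrix_apply, Matrix.cons_val_zero, Matrix.cons_val_one] at hdet
    rw [← hA.1.apply j i, Complex.star_def, Complex.mul_conj, Complex.normSq_eq_norm_sq,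
      sub_nonneg] at hdet
    exact_mod_cast hdet
  have hsq : ‖A i j‖ ^ 2 ≤ ‖A.trace‖ ^ 2 := by
    have hnorm := CStarAlgebra.norm_le_norm_of_nonneg_of_le (by positivity) hminor
    rw [norm_mul, Complex.norm_real, Real.norm_of_nonneg (by positivity)] at hnorm
    nlinarith [hdiag i, hdiag j, norm_nonneg (A i i), norm_nonneg (A j j)]
  exact (pow_le_pow_iff_left₀ (norm_nonneg _) (norm_nonneg _) two_ne_zero).1 hsq

lemma Continuous.integrable_of_ae_mem_compact {X E : Type*} [MeasurableSpace X]
    [TopologicalSpace X] [OpensMeasurableSpace X] [T2Space X] [NormedAddCommGroup E]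
    {μ : Measure X} [IsFiniteMeasure μ] {f : X → E} {K : Set X} (hf : Continuous f)
    (hK : IsCompact K) (hμK : ∀ᵐ x ∂μ, x ∈ K) : Integrable f μ := by
  rw [← Measure.restrict_eq_self_of_ae_mem hμK]
  exact hf.continuousOn.integrableOn_compact hK

lemma MeasureTheory.MeasurePreserving.map_restrict_eq_of_preimage_eq {α : Type*} [MeasurableSpace α]
    {μ : Measure α} {f : α → α} {S : Set α} (hf : MeasurePreserving f μ μ)
    (hS : MeasurableSet S) (hpre : f ⁻¹' S = S) : (μ.restrict S).map f = μ.restrict S := by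
  simpa [hpre] using (hf.restrict_preimage hS).map_eq

section EntrywiseIntegral

variable {ι α : Type*} [Fintype ι] [MeasurableSpace α] {μ : Measure α}

lemma trace_mul_entrywise_integral (A : Matrix ι ι ℂ) {F : α → Matrix ι ι ℂ}
    (hF : ∀ i j, Integrable (fun a => F a i j) μ) :
    (A * of fun i j => ∫ a, F a i j ∂μ).trace = ∫ a, (A * F a).trace ∂μ := by
  simp only [trace, diag_apply, mul_apply, of_apply, ← integral_const_mul]
  symm
  refine (integral_finsetSum _ fun i _ => integrable_finsetSum _ fun j _ =>
    (hF j i).const_mul _).trans (Finset.sum_congr rfl fun i _ => ?_)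
  exact integral_finsetSum _ fun j _ => (hF j i).const_mul _

lemma entrywise_integral_trace_mul {F : α → Matrix ι ι ℂ} (B : Matrix ι ι ℂ)
    (hF : ∀ i j, Integrable (fun a => F a i j) μ) :
    ((of fun i j => ∫ a, F a i j ∂μ) * B).trace = ∫ a, (F a * B).trace ∂μ := by
  simp only [trace_mul_comm _ B]
  exact trace_mul_entrywise_integral B hF

end EntrywiseIntegral

section Twirl

variable {d n : ℕ} {ν μ : Measure (Matrix (Fin d) (Fin d) ℂ)}

lemma integral_trace_tpow_mul_conj {V : Matrix (Fin d) (Fin d) ℂ}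
    (hV : Measure.map (fun ρ => Vᴴ * ρ * V) ν = ν) (M : MatN d n) :
    ∫ ρ, (tpow d n ρ * (tpow d n V * M * (tpow d n V)ᴴ)).trace ∂ν
      = ∫ ρ, (tpow d n ρ * M).trace ∂ν := by
  have hconj : Continuous fun ρ : Matrix (Fin d) (Fin d) ℂ => Vᴴ * ρ * V := by fun_prop
  have htr : Continuous fun σ => (tpow d n σ * M).trace := by fun_prop
  simp only [trace_tpow_mul_conj]
  conv_rhs => rw [← hV]
  exact (integral_map hconj.aemeasurable htr.aestronglyMeasurable).symm

theorem integral_trace_tpow_mul_twirl [IsFiniteMeasure ν] [IsProbabilityMeasure μ]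
    (hν : ∀ᵐ ρ ∂ν, ρ.PosSemidef ∧ ρ.trace = 1)
    (hμ : ∀ᵐ V ∂μ, V ∈ unitaryGroup (Fin d) ℂ)
    (hinv : ∀ᵐ V ∂μ, Measure.map (fun ρ => Vᴴ * ρ * V) ν = ν) (M : MatN d n) :
    ∫ ρ, (tpow d n ρ * of fun x y => ∫ V, (tpow d n V * M * (tpow d n V)ᴴ) x y ∂μ).trace ∂ν
      = ∫ ρ, (tpow d n ρ * M).trace ∂ν := by
  have hK := isCompact_setOf_norm_apply_le_one (Fin d) (Fin d)
  have hνK : ∀ᵐ ρ ∂ν, ∀ i j, ‖ρ i j‖ ≤ 1 := hν.mono fun ρ ⟨hρ, htr⟩ i j => by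
    simpa [htr] using hρ.norm_apply_le_norm_trace i j
  have hμK : ∀ᵐ V ∂μ, ∀ i j, ‖V i j‖ ≤ 1 := hμ.mono fun V hV => entry_norm_bound_of_unitary hV
  have hνint (x y : Fin n → Fin d) : Integrable (fun ρ => tpow d n ρ x y) ν :=
    Continuous.integrable_of_ae_mem_compact (by fun_prop) hK hνK
  have hμint (x y : Fin n → Fin d) :
      Integrable (fun V => (tpow d n V * M * (tpow d n V)ᴴ) x y) μ :=
    Continuous.integrable_of_ae_mem_compact (by fun_prop) hK hμK
  set R : MatN d n := of fun x y => ∫ ρ, tpow d n ρ x y ∂ν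
  calc _ = (R * of fun x y => ∫ V, (tpow d n V * M * (tpow d n V)ᴴ) x y ∂μ).trace :=
        (entrywise_integral_trace_mul _ hνint).symm
    _ = ∫ V, (R * (tpow d n V * M * (tpow d n V)ᴴ)).trace ∂μ :=
        trace_mul_entrywise_integral R hμint
    _ = ∫ V, ∫ ρ, (tpow d n ρ * (tpow d n V * M * (tpow d n V)ᴴ)).trace ∂ν ∂μ := by
        simp only [R, entrywise_integral_trace_mul _ hνint]
    _ = ∫ V, ∫ ρ, (tpow d n ρ * M).trace ∂ν ∂μ :=
        integral_congr_ae (hinv.mono fun V hV => integral_trace_tpow_mul_conj hV M)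
    _ = _ := by simp

end Twirl

section Carrier

variable {d : ℕ} {H : Subgroup (Matrix.unitaryGroup (Fin d) ℂ)} {V : Matrix (Fin d) (Fin d) ℂ}

lemma mem_unitaryGroup_of_mem_carrier (hV : V ∈ carrier d H) : V ∈ unitaryGroup (Fin d) ℂ := by
  obtain ⟨U, -, rfl⟩ := hV
  exact U.2

lemma conjTranspose_mem_carrier (hV : V ∈ carrier d H) : Vᴴ ∈ carrier d H := by
  obtain ⟨U, hU, rfl⟩ := hV
  exact ⟨U⁻¹, H.inv_mem hU, rfl⟩

end Carrier

theorem twirling_lemma_general (d n l : ℕ)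
    (H : Subgroup (Matrix.unitaryGroup (Fin d) ℂ))
    -- μ is the Haar probability measure of H, viewed as a measure on matrices
    (μ : Measure (Matrix (Fin d) (Fin d) ℂ)) [IsProbabilityMeasure μ]
    (hμsupp : μ (carrier d H)ᶜ = 0)
    -- p is a prior over density matrices, invariant under H
    (p : Measure (Matrix (Fin d) (Fin d) ℂ)) [IsProbabilityMeasure p]
    (hpsupp : p {ρ | ¬ (ρ.PosSemidef ∧ ρ.trace = 1)} = 0)
    (hpinv : ∀ V ∈ carrier d H, Measure.map (fun ρ => V * ρ * Vᴴ) p = p)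
    -- the parameters s are Borel measurable and invariant under H
    (s : Matrix (Fin d) (Fin d) ℂ → (Fin l → ℝ)) (hs : Measurable s)
    (hsinv : ∀ V ∈ carrier d H, ∀ ρ, s (V * ρ * Vᴴ) = s ρ)
    (M : MatN d n) :
    ∀ Δ : Set (Fin l → ℝ), MeasurableSet Δ →
      ∫ ρ in {ρ | s ρ ∈ Δ},
          (tpow d n ρ *
            (Matrix.of fun x y => ∫ V, (tpow d n V * M * (tpow d n V)ᴴ) x y ∂μ)).trace ∂p
      = ∫ ρ in {ρ | s ρ ∈ Δ}, (tpow d n ρ * M).trace ∂p := by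
  intro Δ hΔ
  have hμH : ∀ᵐ V ∂μ, V ∈ carrier d H := ae_iff.2 hμsupp
  refine integral_trace_tpow_mul_twirl (ae_restrict_of_ae (ae_iff.2 hpsupp))
    (hμH.mono fun V => mem_unitaryGroup_of_mem_carrier) (hμH.mono fun V hV => ?_) M
  have hVstar := conjTranspose_mem_carrier hV
  have hconj : MeasurePreserving (fun ρ => Vᴴ * ρ * V) p p :=
    ⟨Continuous.measurable (by fun_prop), by simpa using hpinv Vᴴ hVstar⟩
  refine hconj.map_restrict_eq_of_preimage_eq (hs hΔ) (Set.ext fun ρ => ?_)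
  simpa using congrArg (· ∈ Δ) (hsinv Vᴴ hVstar ρ)

theorem twirling_lemma (d n l : ℕ) (hd : 1 ≤ d) (hn : 1 ≤ n)
    (H : Subgroup (Matrix.unitaryGroup (Fin d) ℂ))
    (hclosed : IsClosed (carrier d H))
    -- μ is the Haar probability measure of H, viewed as a measure on matrices
    (μ : Measure (Matrix (Fin d) (Fin d) ℂ)) [IsProbabilityMeasure μ]
    (hμsupp : μ (carrier d H)ᶜ = 0)
    (hμinv : ∀ V ∈ carrier d H, Measure.map (fun W => V * W) μ = μ)
    -- p is a prior over density matrices, invariant under H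
    (p : Measure (Matrix (Fin d) (Fin d) ℂ)) [IsProbabilityMeasure p]
    (hpsupp : p {ρ | ¬ (ρ.PosSemidef ∧ ρ.trace = 1)} = 0)
    (hpinv : ∀ V ∈ carrier d H, Measure.map (fun ρ => V * ρ * Vᴴ) p = p)
    -- the parameters s are Borel measurable and invariant under H
    (s : Matrix (Fin d) (Fin d) ℂ → (Fin l → ℝ)) (hs : Measurable s)
    (hsinv : ∀ V ∈ carrier d H, ∀ ρ, s (V * ρ * Vᴴ) = s ρ)
    (M : MatN d n) :
    ∀ Δ : Set (Fin l → ℝ), MeasurableSet Δ →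
      ∫ ρ in {ρ | s ρ ∈ Δ},
          (tpow d n ρ *
            (Matrix.of fun x y => ∫ V, (tpow d n V * M * (tpow d n V)ᴴ) x y ∂μ)).trace ∂p
      = ∫ ρ in {ρ | s ρ ∈ Δ}, (tpow d n ρ * M).trace ∂p :=
  twirling_lemma_general d n l H μ hμsupp p hpsupp hpinv s hs hsinv M
end
end

section
/- Failure of the duality for a non-gauge group (spin-1 representation): let ψ : (Fin 2 → Fin 3) → ℂ be defined by ψ(x) = 1 if x 0 = x 1 and 0 otherwise (the unnormalized vector ∑_i e_i⊗e_i in ℂ³⊗ℂ³), and let X be the rank-one matrix on ℂ³⊗ℂ³ with entries X(x,y) = ψ(x)·conj(ψ(y)). Then: (i) for every real 3×3 matrix R with R·Rᵀ = 1 and det R = 1 (i.e. R ∈ SO(3)), the complexification Rℂ of R satisfies (Rℂ ⊗ Rℂ)·X = X·(Rℂ ⊗ Rℂ); (ii) Swap·X = X·Swap; (iii) X is not a ℂ-linear combination of the identity matrix and Swap. Consequently, the commutant of {Rℂ⊗Rℂ : R ∈ SO(3)} on ℂ³⊗ℂ³ is strictly larger than the ℂ-subalgebra generated by the permutation operators {1,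 Swap}. -/
/- Failure of the duality for a non-gauge group: the maximally entangled
(unnormalized) vector ψ = ∑ᵢ eᵢ ⊗ eᵢ in ℂ³ ⊗ ℂ³ gives a rank-one operator X
commuting with R ⊗ R for every R ∈ SO(3) and with Swap, yet X is not a linear
combination of 1 and Swap; hence the commutant of the collective SO(3) action
is strictly larger than the algebra generated by the permutation operators. -/

open Matrix

noncomputable section

/-- Matrices on ℂ³ ⊗ ℂ³, indexed by functions x : Fin 2 → Fin 3. -/
abbrev Mat33 := Matrix (Fin 2 → Fin 3) (Fin 2 → Fin 3) ℂ

/-- The tensor product V ⊗ W of two matrices on ℂ³. -/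
def kron33 (V W : Matrix (Fin 3) (Fin 3) ℂ) : Mat33 :=
  Matrix.of fun x y => V (x 0) (y 0) * W (x 1) (y 1)

/-- The swap operator on ℂ³ ⊗ ℂ³. -/
def swap33 : Mat33 :=
  Matrix.of fun x y => if x 0 = y 1 ∧ x 1 = y 0 then 1 else 0

/-- The unnormalized maximally entangled vector ∑ᵢ eᵢ ⊗ eᵢ. -/
def psi : (Fin 2 → Fin 3) → ℂ := fun x => if x 0 = x 1 then 1 else 0

/-- The rank-one operator |ψ⟩⟨ψ|. -/
def Xmat : Mat33 := Matrix.of fun x y => psi x * star (psi y)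

/- ψ is the vectorization of the identity matrix, and (A ⊗ B) vec M = vec (A M Bᵀ); so for
orthogonal A both A ⊗ A and (A ⊗ A)ᵀ fix ψ, and X = ψψᵀ commutes with A ⊗ A. Swap permutes the
two tensor factors, hence fixes ψ and commutes with every A ⊗ A. Since Swap² = 1, the algebra it
generates is spanned by 1 and Swap, and every such matrix vanishes at the entry indexed by
(![0, 0], ![1, 1]), where X equals 1. -/

theorem Fintype.sum_fin_two_arrow {α M : Type*} [Fintype α] [AddCommMonoid M]
    (f : (Fin 2 → α) → M) : ∑ x, f x = ∑ i, ∑ j, f ![i, j] := by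
  rw [← (finTwoArrowEquiv α).symm.sum_comp, Fintype.sum_prod_type]
  simp only [finTwoArrowEquiv_symm_apply]

theorem Algebra.adjoin_singleton_le_span_pair_of_mul_self_eq_one {R A : Type*} [CommSemiring R]
    [Semiring A] [Algebra R A] {s : A} (hs : s * s = 1) :
    Subalgebra.toSubmodule (Algebra.adjoin R {s}) ≤ Submodule.span R {1, s} := by
  rw [Algebra.adjoin_eq_span]
  refine Submodule.span_mono ?_
  rw [← Submonoid.powers_eq_closure]
  rintro _ ⟨n, rfl⟩
  obtain ⟨k, rfl | rfl⟩ := Nat.even_or_odd' n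
  · left; simp [pow_mul, sq, hs]
  · right; simp [pow_succ, pow_mul, hs]

theorem map_ofReal_mul_transpose_eq_one {n : Type*} [Fintype n] [DecidableEq n]
    {R : Matrix n n ℝ} (hR : R * Rᵀ = 1) :
    R.map Complex.ofReal * (R.map Complex.ofReal)ᵀ = 1 := by
  have h := congrArg Complex.ofRealHom.mapMatrix hR
  rw [map_mul, map_one, RingHom.mapMatrix_apply, RingHom.mapMatrix_apply, transpose_map] at h
  exact h

def vec33 (M : Matrix (Fin 3) (Fin 3) ℂ) : (Fin 2 → Fin 3) → ℂ := fun x => M (x 0) (x 1)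

theorem kron33_mulVec_vec33 (A B M : Matrix (Fin 3) (Fin 3) ℂ) :
    kron33 A B *ᵥ vec33 M = vec33 (A * M * Bᵀ) := by
  ext x
  simp only [mulVec, dotProduct, Fintype.sum_fin_two_arrow, kron33, vec33, of_apply, mul_apply,
    transpose_apply, Finset.sum_mul, cons_val_zero, cons_val_one]
  rw [Finset.sum_comm]
  refine Finset.sum_congr rfl fun j _ => Finset.sum_congr rfl fun i _ => by ring

theorem vec33_vecMul_kron33 (A B M : Matrix (Fin 3) (Fin 3) ℂ) :
    vec33 M ᵥ* kron33 A B = vec33 (Aᵀ * M * B) := by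
  ext x
  simp only [vecMul, dotProduct, Fintype.sum_fin_two_arrow, kron33, vec33, of_apply, mul_apply,
    transpose_apply, Finset.sum_mul, cons_val_zero, cons_val_one]
  rw [Finset.sum_comm]
  refine Finset.sum_congr rfl fun j _ => Finset.sum_congr rfl fun i _ => by ring

theorem psi_eq_vec33_one : psi = vec33 1 := by
  ext x
  simp [psi, vec33, one_apply]

theorem Xmat_eq_vecMulVec : Xmat = vecMulVec psi psi := by
  ext x y
  simp [Xmat, psi, vecMulVec_apply]

theorem kron33_mul_Xmat_of_mul_transpose_eq_one {A : Matrix (Fin 3) (Fin 3) ℂ}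
    (hA : A * Aᵀ = 1) : kron33 A A * Xmat = Xmat * kron33 A A := by
  have hA' : Aᵀ * A = 1 := mul_eq_one_comm.mp hA
  rw [Xmat_eq_vecMulVec, mul_vecMulVec, vecMulVec_mul, psi_eq_vec33_one, kron33_mulVec_vec33,
    vec33_vecMul_kron33, Matrix.mul_one, Matrix.mul_one, hA, hA']

def flipCoords : Equiv.Perm (Fin 2 → Fin 3) := (Equiv.swap 0 1).arrowCongr (Equiv.refl _)

theorem flipCoords_symm : flipCoords.symm = flipCoords := by
  ext x i
  fin_cases i <;> rfl

theorem swap33_eq_permMatrix : swap33 = flipCoords.permMatrix ℂ := by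
  ext x y
  simp [swap33, flipCoords, PEquiv.toMatrix_apply, Equiv.toPEquiv_apply, funext_iff,
    Fin.forall_fin_two, eq_comm, and_comm]

theorem swap33_mul_self : swap33 * swap33 = 1 := by
  have hflip : flipCoords * flipCoords = 1 := by
    ext x i
    fin_cases i <;> rfl
  rw [swap33_eq_permMatrix, ← permMatrix_mul, hflip, permMatrix_one]

theorem swap33_mul_kron33 (A B : Matrix (Fin 3) (Fin 3) ℂ) :
    swap33 * kron33 A B = kron33 B A * swap33 := by
  rw [swap33_eq_permMatrix, PEquiv.toMatrix_toPEquiv_mul, PEquiv.mul_toMatrix_toPEquiv]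
  ext x y
  simp [kron33, flipCoords, mul_comm]

theorem swap33_mul_Xmat : swap33 * Xmat = Xmat * swap33 := by
  have hpsi : psi ∘ flipCoords = psi := by
    ext x
    simp [psi, flipCoords, eq_comm]
  rw [Xmat_eq_vecMulVec, mul_vecMulVec, vecMulVec_mul, swap33_eq_permMatrix, permMatrix_mulVec,
    vecMul_permMatrix, flipCoords_symm, hpsi]

def so3Tensor : Set Mat33 :=
  (fun R : Matrix (Fin 3) (Fin 3) ℝ => kron33 (R.map Complex.ofReal) (R.map Complex.ofReal)) ''
    {R | R * Rᵀ = 1 ∧ R.det = 1}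

theorem coe_centralizer_so3Tensor :
    (Subalgebra.centralizer ℂ so3Tensor : Set Mat33)
      = {Y : Mat33 | ∀ R : Matrix (Fin 3) (Fin 3) ℝ, R * Rᵀ = 1 → R.det = 1 →
          kron33 (R.map Complex.ofReal) (R.map Complex.ofReal) * Y
            = Y * kron33 (R.map Complex.ofReal) (R.map Complex.ofReal)} := by
  ext Y
  simp only [so3Tensor, SetLike.mem_coe, Subalgebra.mem_centralizer_iff, Set.forall_mem_image,
    Set.mem_ofPred_eq, and_imp]

theorem Xmat_notMem_span_one_swap33 : Xmat ∉ Submodule.span ℂ ({1, swap33} : Set Mat33) := by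
  rw [Submodule.mem_span_pair]
  rintro ⟨a, b, h⟩
  have hne : (![0, 0] : Fin 2 → Fin 3) ≠ ![1, 1] := by decide
  simpa [Xmat, psi, swap33, one_apply, hne] using congrFun (congrFun h ![0, 0]) ![1, 1]

theorem so3_not_gauge_counterexample :
    (∀ R : Matrix (Fin 3) (Fin 3) ℝ, R * Rᵀ = 1 → R.det = 1 →
      kron33 (R.map Complex.ofReal) (R.map Complex.ofReal) * Xmat
        = Xmat * kron33 (R.map Complex.ofReal) (R.map Complex.ofReal)) ∧
    swap33 * Xmat = Xmat * swap33 ∧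
    (¬ ∃ a b : ℂ, Xmat = a • (1 : Mat33) + b • swap33) ∧
    (Algebra.adjoin ℂ ({swap33} : Set Mat33) : Set Mat33)
      ⊂ {Y : Mat33 | ∀ R : Matrix (Fin 3) (Fin 3) ℝ, R * Rᵀ = 1 → R.det = 1 →
          kron33 (R.map Complex.ofReal) (R.map Complex.ofReal) * Y
            = Y * kron33 (R.map Complex.ofReal) (R.map Complex.ofReal)} := by
  have hX : Xmat ∈ Subalgebra.centralizer ℂ so3Tensor := by
    rintro _ ⟨R, ⟨hR, -⟩, rfl⟩
    exact kron33_mul_Xmat_of_mul_transpose_eq_one (map_ofReal_mul_transpose_eq_one hR)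
  have hswap : swap33 ∈ Subalgebra.centralizer ℂ so3Tensor := by
    rintro _ ⟨R, -, rfl⟩
    exact (swap33_mul_kron33 _ _).symm
  have hadjoin : Algebra.adjoin ℂ {swap33} ≤ Subalgebra.centralizer ℂ so3Tensor :=
    Algebra.adjoin_le (Set.singleton_subset_iff.mpr hswap)
  have hXadjoin : Xmat ∉ Algebra.adjoin ℂ {swap33} := fun h => Xmat_notMem_span_one_swap33 <|
    Algebra.adjoin_singleton_le_span_pair_of_mul_self_eq_one swap33_mul_self h
  refine ⟨fun R hR hdet => hX _ ⟨R, ⟨hR, hdet⟩, rfl⟩, swap33_mul_Xmat, fun ⟨a, b, h⟩ =>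
    Xmat_notMem_span_one_swap33 (Submodule.mem_span_pair.mpr ⟨a, b, h.symm⟩), ?_⟩
  rw [← coe_centralizer_so3Tensor]
  exact (Set.ssubset_iff_of_subset hadjoin).mpr ⟨Xmat, hX, hXadjoin⟩

end
end

section
/- Failure of the symmetric/antisymmetric-subspace duality for other irreducible representations of the permutation group: work on (ℂ⁴)^{⊗3} with ℂ⁴ identified with ℂ²⊗ℂ² (matrices indexed by functions x : Fin 3 → Fin 2 × Fin 2). Let Π_λ := 1 − Π₊ − Π₋ be the orthogonal projector onto the isotypic component of the two-dimensional irreducible representation of S₃. Then there exists a matrix M on (ℂ⁴)^{⊗3} such that: (i) Π_λ·M·Π_λ commutes with P(σ) for every permutation σ of Fin 3; (ii) Π_λ·M·Π_λ commutes with (V⊗I₂)^{⊗3} for every V in the unitary group U(2); (iii) Π_λ·M·Π_λ does NOT belong to the smallest ℂ-linear subspace containing {Π_λ·(I₂⊗W)^{⊗3}·Π_λ : W ∈ U(2)} that is closed under matrix multiplication (the non-unital subalgebra generated by this set). -/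
/- Failure of the symmetric/antisymmetric-subspace duality for the
two-dimensional irreducible representation of S₃ : on (ℂ⁴)^{⊗3} with
ℂ⁴ ≅ ℂ² ⊗ ℂ², there is an operator Π_λ·M·Π_λ which is permutationally invariant
and commutes with the collective action of U(2) on the left factors, but does
not lie in the (non-unital) subalgebra generated by the projected collective
action of U(2) on the right factors. -/

open Matrix

noncomputable section

/-- Matrices on (ℂ⁴)^{⊗3}, with ℂ⁴ ≅ ℂ² ⊗ ℂ². -/
abbrev Mat43 := Matrix (Fin 3 → Fin 2 × Fin 2) (Fin 3 → Fin 2 × Fin 2) ℂ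

/-- The tensor product V ⊗ W of two matrices on ℂ², as a matrix on ℂ⁴. -/
def kron22 (V W : Matrix (Fin 2) (Fin 2) ℂ) :
    Matrix (Fin 2 × Fin 2) (Fin 2 × Fin 2) ℂ :=
  Matrix.of fun p q => V p.1 q.1 * W p.2 q.2

/-- The 3-fold tensor power U^{⊗3} of a matrix U on ℂ⁴. -/
def tpow3 (U : Matrix (Fin 2 × Fin 2) (Fin 2 × Fin 2) ℂ) : Mat43 :=
  Matrix.of fun x y => ∏ i, U (x i) (y i)

/-- The permutation operator P(σ) on (ℂ⁴)^{⊗3}. -/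
def permMat3 (σ : Equiv.Perm (Fin 3)) : Mat43 :=
  Matrix.of fun x y => if x = y ∘ ⇑σ⁻¹ then 1 else 0

/-- Π₊ : the projector onto the symmetric subspace of (ℂ⁴)^{⊗3}. -/
def symProj3 : Mat43 :=
  ((Nat.factorial 3 : ℂ))⁻¹ • ∑ σ : Equiv.Perm (Fin 3), permMat3 σ

/-- Π₋ : the projector onto the antisymmetric subspace of (ℂ⁴)^{⊗3}. -/
def antisymProj3 : Mat43 :=
  ((Nat.factorial 3 : ℂ))⁻¹ • ∑ σ : Equiv.Perm (Fin 3),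
    ((Equiv.Perm.sign σ : ℤ) : ℂ) • permMat3 σ

/-- Π_λ : the projector onto the isotypic component of the two-dimensional
irreducible representation of S₃. -/
def lamProj : Mat43 := 1 - symProj3 - antisymProj3


/- Write a site label as x i = (a, b) ∈ Fin 2 × Fin 2, where V acts on a and W on b. Let
R := ∑_σ Q(σ), where Q(σ) permutes only the b-labels. R commutes with every P(σ), hence with Π_λ,
and with every (I₂ ⊗ W)^{⊗3}, so the algebra generated by the Π_λ (I₂ ⊗ W)^{⊗3} Π_λ lies in the
commutant of R.

Take M := ∑_σ P(σ) · ⊗_i (I₂ ⊗ E_{σ,i}), where E_{σ,i} is |0⟩⟨1| if σ moves i and I₂ otherwise. M commutes with every P(τ), since conjugation by P(τ) permutes the summands, and with every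
(V ⊗ I₂)^{⊗3}. But Π_λ M Π_λ does not commute with R: there are vectors w, v with no symmetric and
no antisymmetric component, so that Π_λ fixes them, such that w R = 6 w, R v = 0 and ⟨w, M v⟩ = 6. -/

open Equiv
open scoped Kronecker

section Relabel

variable {ι α β : Type*}

def permuteSites (σ : Perm ι) : Perm (ι → α) where
  toFun x := x ∘ σ
  invFun x := x ∘ σ.symm
  left_inv x := by ext; simp
  right_inv x := by ext; simp

@[simp]
lemma permuteSites_apply (σ : Perm ι) (x : ι → α) : permuteSites σ x = x ∘ σ := rfl

lemma permuteSites_symm (σ : Perm ι) :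
    (permuteSites σ).symm = (permuteSites σ⁻¹ : Perm (ι → α)) := rfl

lemma permuteSites_permuteSites (σ τ : Perm ι) (x : ι → α) :
    permuteSites σ (permuteSites τ x) = permuteSites τ (permuteSites (τ * σ * τ⁻¹) x) := by
  ext i; simp

def permuteRightSites (σ : Perm ι) : Perm (ι → α × β) where
  toFun x i := ((x i).1, (x (σ i)).2)
  invFun x i := ((x i).1, (x (σ.symm i)).2)
  left_inv x := by ext <;> simp
  right_inv x := by ext <;> simp

lemma permuteRightSites_symm (σ : Perm ι) :
    (permuteRightSites σ).symm = (permuteRightSites σ⁻¹ : Perm (ι → α × β)) := rfl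

lemma permuteRightSites_permuteSites (σ τ : Perm ι) (x : ι → α × β) :
    permuteRightSites σ (permuteSites τ x) =
      permuteSites τ (permuteRightSites (τ * σ * τ⁻¹) x) := by
  ext i <;> simp [permuteRightSites]

end Relabel

section PermMatrix

variable {n R : Type*} [Fintype n] [DecidableEq n] [Semiring R]

lemma commute_permMatrix_iff (π : Perm n) (A : Matrix n n R) :
    Commute (π.permMatrix R) A ↔ ∀ i j, A (π i) (π j) = A i j := by
  rw [Commute, SemiconjBy, PEquiv.toMatrix_toPEquiv_mul, PEquiv.mul_toMatrix_toPEquiv,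
    ← Matrix.ext_iff]
  exact ⟨fun h i j => by simpa using h i (π j), fun h i j => by simpa using h i (π.symm j)⟩

lemma commute_permMatrix_sum {G : Type*} [Fintype G] (ρ : Perm n) (π : G → Perm n) (c : G → R)
    (e : G ≃ G) (hπ : ∀ g x, π g (ρ x) = ρ (π (e g) x)) (hc : ∀ g, c (e g) = c g) :
    Commute (ρ.permMatrix R) (∑ g, c g • (π g).permMatrix R) := by
  rw [commute_permMatrix_iff]
  intro x y
  simp only [Matrix.sum_apply, Matrix.smul_apply, PEquiv.toMatrix_apply, Equiv.toPEquiv_apply,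
    Option.mem_def, Option.some_inj, hπ, ρ.injective.eq_iff, smul_eq_mul]
  exact Fintype.sum_equiv e _ _ fun g => by rw [hc]

end PermMatrix

section SiteKron

variable {ι κ R : Type*} [Fintype ι]

def siteKron [CommMonoid R] (f : ι → Matrix κ κ R) : Matrix (ι → κ) (ι → κ) R :=
  of fun x y => ∏ i, f i (x i) (y i)

variable [DecidableEq ι] [Fintype κ] [CommSemiring R]

lemma siteKron_mul_siteKron (f g : ι → Matrix κ κ R) :
    siteKron f * siteKron g = siteKron (f * g) := by
  ext x y
  simp only [siteKron, mul_apply, of_apply, Pi.mul_apply, ← Finset.prod_mul_distrib]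
  rw [← Fintype.piFinset_univ]
  exact (Finset.prod_univ_sum (fun _ => Finset.univ) fun i j => f i (x i) j * g i j (y i)).symm

lemma commute_siteKron {f g : ι → Matrix κ κ R} (h : ∀ i, Commute (f i) (g i)) :
    Commute (siteKron f) (siteKron g) := by
  rw [Commute, SemiconjBy, siteKron_mul_siteKron, siteKron_mul_siteKron]
  exact congrArg siteKron (funext fun i => h i)

lemma commute_permMatrix_siteKron_const [DecidableEq κ] (σ : Perm ι) (U : Matrix κ κ R) :
    Commute ((permuteSites σ).permMatrix R) (siteKron fun _ => U) := by
  rw [commute_permMatrix_iff]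
  intro x y
  exact Equiv.prod_comp σ fun i => U (x i) (y i)

end SiteKron

lemma tpow3_eq_siteKron (U : Matrix (Fin 2 × Fin 2) (Fin 2 × Fin 2) ℂ) :
    tpow3 U = siteKron fun _ => U := rfl

lemma kron22_eq_kronecker (V W : Matrix (Fin 2) (Fin 2) ℂ) : kron22 V W = V ⊗ₖ W := rfl

lemma permMat3_eq_permMatrix (σ : Perm (Fin 3)) :
    permMat3 σ = (permuteSites σ).permMatrix ℂ := by
  ext x y
  simp only [permMat3, of_apply, PEquiv.toMatrix_apply, Equiv.toPEquiv_apply, Option.mem_def,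
    Option.some_inj, permuteSites_apply]
  congr 1
  exact propext ⟨fun h => by simp [h, Function.comp_assoc],
    fun h => by simp [← h, Function.comp_assoc]⟩

section LamProj

lemma commute_permMat3_tpow3 (σ : Perm (Fin 3)) (U : Matrix (Fin 2 × Fin 2) (Fin 2 × Fin 2) ℂ) :
    Commute (permMat3 σ) (tpow3 U) := by
  rw [permMat3_eq_permMatrix]
  exact commute_permMatrix_siteKron_const σ U

lemma commute_permMat3_sum_smul_permMat3 (τ : Perm (Fin 3)) (c : Perm (Fin 3) → ℂ)
    (hc : ∀ σ, c (τ * σ * τ⁻¹) = c σ) : Commute (permMat3 τ) (∑ σ, c σ • permMat3 σ) := by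
  simp only [permMat3_eq_permMatrix]
  exact commute_permMatrix_sum _ _ c (MulAut.conj τ).toEquiv
    (fun σ x => permuteSites_permuteSites σ τ x) hc

lemma commute_permMat3_lamProj (τ : Perm (Fin 3)) : Commute (permMat3 τ) lamProj := by
  have hsym := commute_permMat3_sum_smul_permMat3 τ 1 fun _ => rfl
  have hsign := commute_permMat3_sum_smul_permMat3 τ (fun σ => ((Perm.sign σ : ℤ) : ℂ))
    fun σ => by
      rw [Perm.sign_mul, Perm.sign_mul, Perm.sign_inv, mul_right_comm, Int.units_mul_self, one_mul]
  simp only [Pi.one_apply, one_smul] at hsym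
  exact ((Commute.one_right _).sub_right (hsym.smul_right _)).sub_right (hsign.smul_right _)

lemma commute_lamProj_of_commute_permMat3 {A : Mat43} (h : ∀ σ, Commute (permMat3 σ) A) :
    Commute lamProj A :=
  ((Commute.one_left A).sub_left ((Commute.sum_left _ _ _ fun σ _ => h σ).smul_left _)).sub_left
    ((Commute.sum_left _ _ _ fun σ _ => (h σ).smul_left _).smul_left _)

variable {f : (Fin 3 → Fin 2 × Fin 2) → ℂ} (hsym : ∑ σ, f ∘ permuteSites σ = 0)
  (hsign : ∑ σ, ((Perm.sign σ : ℤ) : ℂ) • f ∘ permuteSites σ = 0)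
include hsym hsign

lemma lamProj_mulVec_eq_self : lamProj *ᵥ f = f := by
  simp only [lamProj, symProj3, antisymProj3, sub_mulVec, one_mulVec, smul_mulVec, sum_mulVec,
    permMat3_eq_permMatrix, permMatrix_mulVec, hsym, hsign, smul_zero, sub_zero]

lemma vecMul_lamProj_eq_self : f ᵥ* lamProj = f := by
  have hsym' : ∑ σ, f ∘ permuteSites σ⁻¹ = 0 := by
    rw [← hsym]; exact Fintype.sum_equiv (Equiv.inv _) _ _ fun _ => rfl
  have hsign' : ∑ σ, ((Perm.sign σ : ℤ) : ℂ) • f ∘ permuteSites σ⁻¹ = 0 := by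
    rw [← hsign]; exact Fintype.sum_equiv (Equiv.inv _) _ _ fun _ => by simp
  simp only [lamProj, symProj3, antisymProj3, vecMul_sub, vecMul_one, vecMul_smul, vecMul_sum,
    permMat3_eq_permMatrix, vecMul_permMatrix, permuteSites_symm, hsym', hsign', smul_zero,
    sub_zero]

end LamProj

section LoweredPermSum

def lowerFactor (R : Type*) [Zero R] [One R] (σ : Perm (Fin 3)) (i : Fin 3) :
    Matrix (Fin 2) (Fin 2) R :=
  if σ i = i then 1 else single 0 1 1

lemma lowerFactor_conj (R : Type*) [Zero R] [One R] (σ τ : Perm (Fin 3)) (i : Fin 3) :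
    lowerFactor R σ (τ⁻¹ i) = lowerFactor R (τ * σ * τ⁻¹) i := by
  unfold lowerFactor
  congr 1
  simp [Perm.mul_apply, Equiv.eq_symm_apply]

def loweredPermSum (R : Type*) [CommRing R] :
    Matrix (Fin 3 → Fin 2 × Fin 2) (Fin 3 → Fin 2 × Fin 2) R :=
  of fun x y => ∑ σ, siteKron (fun i => 1 ⊗ₖ lowerFactor R σ i) (x ∘ σ) y

lemma loweredPermSum_eq_sum (R : Type*) [CommRing R] :
    loweredPermSum R =
      ∑ σ, (permuteSites σ).permMatrix R * siteKron (fun i => 1 ⊗ₖ lowerFactor R σ i) := by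
  ext x y
  simp [loweredPermSum, Matrix.sum_apply, PEquiv.toMatrix_toPEquiv_mul, submatrix_apply]

lemma loweredPermSum_intCast (x y : Fin 3 → Fin 2 × Fin 2) :
    ((loweredPermSum ℤ x y : ℤ) : ℂ) = loweredPermSum ℂ x y := by
  simp only [loweredPermSum, of_apply, siteKron, kroneckerMap_apply, Int.cast_sum, Int.cast_prod,
    Int.cast_mul]
  refine Finset.sum_congr rfl fun σ _ => Finset.prod_congr rfl fun i _ => ?_
  unfold lowerFactor
  split_ifs <;> simp only [one_apply, single_apply] <;> push_cast <;> rfl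

lemma commute_permMat3_loweredPermSum (τ : Perm (Fin 3)) :
    Commute (permMat3 τ) (loweredPermSum ℂ) := by
  rw [permMat3_eq_permMatrix, commute_permMatrix_iff]
  intro x y
  simp only [loweredPermSum, of_apply, siteKron, permuteSites_apply, Function.comp_apply]
  refine Fintype.sum_equiv (MulAut.conj τ).toEquiv _ _ fun σ => ?_
  rw [← Equiv.prod_comp τ⁻¹]
  refine Finset.prod_congr rfl fun i _ => ?_
  rw [lowerFactor_conj]
  simp [Perm.mul_apply]

lemma commute_loweredPermSum_tpow3_kron22_left (V : Matrix (Fin 2) (Fin 2) ℂ) :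
    Commute (loweredPermSum ℂ) (tpow3 (kron22 V 1)) := by
  rw [loweredPermSum_eq_sum, tpow3_eq_siteKron]
  refine Commute.sum_left _ _ _ fun σ _ => ?_
  refine (commute_permMatrix_siteKron_const σ _).mul_left (commute_siteKron fun i => ?_)
  rw [kron22_eq_kronecker, Commute, SemiconjBy, ← mul_kronecker_mul, ← mul_kronecker_mul]
  simp

end LoweredPermSum

section RightPermSum

def rightPermSum : Mat43 := ∑ σ : Perm (Fin 3), (permuteRightSites σ).permMatrix ℂ

lemma commute_permMat3_rightPermSum (τ : Perm (Fin 3)) :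
    Commute (permMat3 τ) rightPermSum := by
  rw [permMat3_eq_permMatrix]
  simpa [rightPermSum] using commute_permMatrix_sum (permuteSites τ) (fun σ => permuteRightSites σ)
    (fun _ => (1 : ℂ)) (MulAut.conj τ).toEquiv (fun σ x => permuteRightSites_permuteSites σ τ x)
    fun _ => rfl

lemma commute_rightPermSum_tpow3_kron22_right (W : Matrix (Fin 2) (Fin 2) ℂ) :
    Commute rightPermSum (tpow3 (kron22 1 W)) := by
  refine Commute.sum_left _ _ _ fun σ _ => ?_
  rw [commute_permMatrix_iff]
  intro x y
  simp only [tpow3, kron22, of_apply, Finset.prod_mul_distrib, permuteRightSites, Equiv.coe_fn_mk]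
  rw [Equiv.prod_comp σ fun i => W (x i).2 (y i).2]

lemma rightPermSum_mulVec (f : (Fin 3 → Fin 2 × Fin 2) → ℂ) :
    rightPermSum *ᵥ f = ∑ σ, f ∘ permuteRightSites σ := by
  simp only [rightPermSum, sum_mulVec, permMatrix_mulVec]

lemma vecMul_rightPermSum (f : (Fin 3 → Fin 2 × Fin 2) → ℂ) :
    f ᵥ* rightPermSum = ∑ σ, f ∘ permuteRightSites σ := by
  simp only [rightPermSum, vecMul_sum, vecMul_permMatrix, permuteRightSites_symm]
  exact Fintype.sum_equiv (Equiv.inv _) _ _ fun _ => rfl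

end RightPermSum

lemma not_commute_of_eigenvectors {n R : Type*} [Fintype n] [CommRing R] [NoZeroDivisors R]
    {A B : Matrix n n R} {w v : n → R} {a b : R} (hw : w ᵥ* B = a • w) (hv : B *ᵥ v = b • v)
    (hab : a ≠ b) (hA : w ⬝ᵥ (A *ᵥ v) ≠ 0) : ¬ Commute A B := by
  intro h
  have key := congrArg (fun C => w ⬝ᵥ (C *ᵥ v)) h.eq
  simp only [← mulVec_mulVec, hv, mulVec_smul, dotProduct_smul, dotProduct_mulVec w B, hw,
    smul_dotProduct, smul_eq_mul] at key
  exact hab (mul_right_cancel₀ hA key).symm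

section Witnesses

/- In the (a, b) labels, `rowWitness` is (|100⟩ - |010⟩) ⊗ |000⟩, and `colWitness` is the part of
`rowWitness ᵥ* loweredPermSum` coming from the transpositions. -/
def rowWitness (R : Type*) [Ring R] (x : Fin 3 → Fin 2 × Fin 2) : R :=
  if x = ![(1, 0), (0, 0), (0, 0)] then 1 else if x = ![(0, 0), (1, 0), (0, 0)] then -1 else 0

def colWitness (R : Type*) [Ring R] (x : Fin 3 → Fin 2 × Fin 2) : R :=
  if x = ![(1, 0), (0, 1), (0, 1)] then 1
  else if x = ![(0, 1), (1, 0), (0, 1)] then -1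
  else if x = ![(1, 1), (0, 1), (0, 0)] then -1
  else if x = ![(0, 1), (1, 1), (0, 0)] then 1
  else if x = ![(0, 1), (0, 0), (1, 1)] then 1
  else if x = ![(0, 0), (0, 1), (1, 1)] then -1
  else 0

@[simp]
lemma rowWitness_intCast (x : Fin 3 → Fin 2 × Fin 2) :
    ((rowWitness ℤ x : ℤ) : ℂ) = rowWitness ℂ x := by
  unfold rowWitness; split_ifs <;> simp

@[simp]
lemma colWitness_intCast (x : Fin 3 → Fin 2 × Fin 2) :
    ((colWitness ℤ x : ℤ) : ℂ) = colWitness ℂ x := by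
  unfold colWitness; split_ifs <;> simp

lemma rowWitness_eq_single : rowWitness ℂ =
    Pi.single ![(1, 0), (0, 0), (0, 0)] 1 - Pi.single ![(0, 0), (1, 0), (0, 0)] 1 := by
  funext x
  simp only [rowWitness, Pi.sub_apply, Pi.single_apply]
  split_ifs <;> simp_all

lemma sum_rowWitness_comp_permuteSites : ∑ σ, rowWitness ℂ ∘ permuteSites σ = 0 :=
  funext fun x => by
    simpa using congrArg (Int.cast : ℤ → ℂ)
      ((by decide +kernel : ∀ x, ∑ σ, rowWitness ℤ (permuteSites σ x) = 0) x)

lemma sum_sign_smul_rowWitness_comp_permuteSites :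
    ∑ σ, ((Perm.sign σ : ℤ) : ℂ) • rowWitness ℂ ∘ permuteSites σ = 0 :=
  funext fun x => by
    simpa using congrArg (Int.cast : ℤ → ℂ) ((by decide +kernel :
      ∀ x, ∑ σ, (Perm.sign σ : ℤ) * rowWitness ℤ (permuteSites σ x) = 0) x)

lemma sum_colWitness_comp_permuteSites : ∑ σ, colWitness ℂ ∘ permuteSites σ = 0 :=
  funext fun x => by
    simpa using congrArg (Int.cast : ℤ → ℂ)
      ((by decide +kernel : ∀ x, ∑ σ, colWitness ℤ (permuteSites σ x) = 0) x)

lemma sum_sign_smul_colWitness_comp_permuteSites :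
    ∑ σ, ((Perm.sign σ : ℤ) : ℂ) • colWitness ℂ ∘ permuteSites σ = 0 :=
  funext fun x => by
    simpa using congrArg (Int.cast : ℤ → ℂ) ((by decide +kernel :
      ∀ x, ∑ σ, (Perm.sign σ : ℤ) * colWitness ℤ (permuteSites σ x) = 0) x)

lemma rowWitness_vecMul_rightPermSum : rowWitness ℂ ᵥ* rightPermSum = (6 : ℂ) • rowWitness ℂ := by
  rw [vecMul_rightPermSum]
  funext x
  simpa using congrArg (Int.cast : ℤ → ℂ) ((by decide +kernel :
    ∀ x, ∑ σ, rowWitness ℤ (permuteRightSites σ x) = 6 * rowWitness ℤ x) x)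

lemma rightPermSum_mulVec_colWitness : rightPermSum *ᵥ colWitness ℂ = (0 : ℂ) • colWitness ℂ := by
  rw [rightPermSum_mulVec, zero_smul]
  funext x
  simpa using congrArg (Int.cast : ℤ → ℂ)
    ((by decide +kernel : ∀ x, ∑ σ, colWitness ℤ (permuteRightSites σ x) = 0) x)

lemma rowWitness_dotProduct_loweredPermSum_mulVec_colWitness :
    rowWitness ℂ ⬝ᵥ (loweredPermSum ℂ *ᵥ colWitness ℂ) = 6 := by
  have h := congrArg (Int.cast : ℤ → ℂ) (by decide +kernel :
    ∑ y, loweredPermSum ℤ ![(1, 0), (0, 0), (0, 0)] y * colWitness ℤ y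
      - ∑ y, loweredPermSum ℤ ![(0, 0), (1, 0), (0, 0)] y * colWitness ℤ y = 6)
  push_cast [loweredPermSum_intCast, colWitness_intCast] at h
  rw [rowWitness_eq_single, sub_dotProduct, single_dotProduct, single_dotProduct, one_mul, one_mul]
  simpa only [mulVec, dotProduct] using h

end Witnesses

lemma not_commute_lamProj_loweredPermSum_lamProj_rightPermSum :
    ¬ Commute (lamProj * loweredPermSum ℂ * lamProj) rightPermSum := by
  refine not_commute_of_eigenvectors rowWitness_vecMul_rightPermSum
    rightPermSum_mulVec_colWitness (by norm_num) ?_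
  rw [← mulVec_mulVec, ← mulVec_mulVec,
    lamProj_mulVec_eq_self sum_colWitness_comp_permuteSites
      sum_sign_smul_colWitness_comp_permuteSites,
    dotProduct_mulVec,
    vecMul_lamProj_eq_self sum_rowWitness_comp_permuteSites
      sum_sign_smul_rowWitness_comp_permuteSites,
    rowWitness_dotProduct_loweredPermSum_mulVec_colWitness]
  norm_num

theorem lambda_subspace_duality_fails :
    ∃ M : Mat43,
      (∀ σ : Equiv.Perm (Fin 3),
        (lamProj * M * lamProj) * permMat3 σ = permMat3 σ * (lamProj * M * lamProj)) ∧
      (∀ V : Matrix (Fin 2) (Fin 2) ℂ, V ∈ Matrix.unitaryGroup (Fin 2) ℂ →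
        (lamProj * M * lamProj) * tpow3 (kron22 V 1)
          = tpow3 (kron22 V 1) * (lamProj * M * lamProj)) ∧
      (lamProj * M * lamProj) ∉ NonUnitalAlgebra.adjoin ℂ
        {Y : Mat43 | ∃ W ∈ Matrix.unitaryGroup (Fin 2) ℂ,
          Y = lamProj * tpow3 (kron22 1 W) * lamProj} := by
  have hRL : Commute rightPermSum lamProj :=
    (commute_lamProj_of_commute_permMat3 commute_permMat3_rightPermSum).symm
  refine ⟨loweredPermSum ℂ, fun σ => ?_, fun V _ => ?_, fun hmem => ?_⟩
  · have hPL := commute_permMat3_lamProj σ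
    exact ((hPL.mul_right (commute_permMat3_loweredPermSum σ)).mul_right hPL).symm
  · have hUL := (commute_lamProj_of_commute_permMat3 fun σ =>
      commute_permMat3_tpow3 σ (kron22 V 1)).symm
    exact ((hUL.mul_right (commute_loweredPermSum_tpow3_kron22_left V).symm).mul_right hUL).symm
  · refine not_commute_lamProj_loweredPermSum_lamProj_rightPermSum ?_
    suffices h : NonUnitalAlgebra.adjoin ℂ _ ≤ NonUnitalSubalgebra.centralizer ℂ {rightPermSum} from
      ((NonUnitalSubalgebra.mem_centralizer_iff ℂ).1 (h hmem) _ rfl).symm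
    refine NonUnitalAlgebra.adjoin_le ?_
    rintro _ ⟨W, -, rfl⟩ _ rfl
    exact (hRL.mul_right (commute_rightPermSum_tpow3_kron22_right W)).mul_right hRL
end
end
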